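/- Let ρ : ℂ → ℂ be continuous, real differentiable at z₀ ∈ ℂ with ∂_w ρ(z₀) ≠ 0 and ∂̄_w ρ(z₀) ≠ 0. Then for every compact K ⊆ ℂ and ε > 0 there exist a ℂ-affine map φ : ℂ → ℂ² and a ℂ-affine map ψ : ℂ² → ℂ² such that sup_{z ∈ K} ‖ψ(ρ(φ(z)₁), ρ(φ(z)₂)) − (z, conj(z))‖ < ε, where ‖·‖ is the Euclidean norm on ℂ². -/

import Mathlib

/-- Wirtinger derivative ∂_w f = (1/2)(∂f/∂x − i ∂f/∂y). -/
noncomputable def wirt (f : ℂ → ℂ) (z : ℂ) : ℂ :=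
  (1/2) * (fderiv ℝ f z 1 - Complex.I * fderiv ℝ f z Complex.I)

/-- Conjugate Wirtinger derivative ∂̄_w f = (1/2)(∂f/∂x + i ∂f/∂y). -/
noncomputable def awirt (f : ℂ → ℂ) (z : ℂ) : ℂ :=
  (1/2) * (fderiv ℝ f z 1 + Complex.I * fderiv ℝ f z Complex.I)

/-!
To first order, `ρ (z₀ + w) ≈ ρ z₀ + a w + b conj w` with `a = ∂_w ρ(z₀)` and `b = ∂̄_w ρ(z₀)`.
Sampling `ρ` at `z₀ + t z` and `z₀ + t i z` therefore gives, up to `ρ z₀` and `o(t)`, the values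
`t (a z + b conj z)` and `t i (a z - b conj z)`; as `a, b ≠ 0`, a ℂ-linear map recovers
`(z, conj z)` from them. The rescaled difference quotients converge uniformly on bounded sets as
`t → 0`, so a small `t` makes the error less than `ε` on `K`.
-/

open Complex ComplexConjugate Filter Topology

theorem fderiv_apply_eq_wirt_mul_add_awirt_mul_conj (f : ℂ → ℂ) (z w : ℂ) :
    fderiv ℝ f z w = wirt f z * w + awirt f z * conj w := by
  obtain ⟨x, y, rfl⟩ : ∃ x y : ℝ, w = x + y * I := ⟨w.re, w.im, (re_add_im w).symm⟩
  have hlin : fderiv ℝ f z (x + y * I) = x * fderiv ℝ f z 1 + y * fderiv ℝ f z I := by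
    have h := (fderiv ℝ f z).map_add (x • (1 : ℂ)) (y • I)
    rw [map_smul, map_smul] at h
    simpa only [Complex.real_smul, mul_one] using h
  rw [wirt, awirt, hlin]
  simp only [map_add, map_mul, conj_ofReal, conj_I]
  linear_combination (↑y * fderiv ℝ f z I) * I_sq

theorem HasFDerivAt.tendstoUniformlyOn_diffQuot {𝕜 E F : Type*} [NontriviallyNormedField 𝕜]
    [NormedAddCommGroup E] [NormedSpace 𝕜 E] [NormedAddCommGroup F] [NormedSpace 𝕜 F]
    {f : E → F} {f' : E →L[𝕜] F} {x : E} (hf : HasFDerivAt f f' x) {K : Set E}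
    (hK : Bornology.IsBounded K) :
    TendstoUniformlyOn (fun (t : 𝕜) z => t⁻¹ • (f (x + t • z) - f x)) f' (𝓝[≠] 0) K := by
  obtain ⟨R, hR, hKR⟩ := hK.subset_closedBall_lt 0 0
  rw [Metric.tendstoUniformlyOn_iff]
  intro η hη
  obtain ⟨r, hr, hsmall⟩ := Metric.eventually_nhds_iff.1
    ((hasFDerivAt_iff_isLittleO_nhds_zero.1 hf).def (c := η / (2 * R)) (by positivity))
  have ht : ∀ᶠ t : 𝕜 in 𝓝 0, ‖t‖ < r / R := by
    filter_upwards [Metric.ball_mem_nhds (0 : 𝕜) (div_pos hr hR)] with t ht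
    exact mem_ball_zero_iff.1 ht
  filter_upwards [nhdsWithin_le_nhds ht, self_mem_nhdsWithin] with t htr (ht0 : t ≠ 0) z hz
  have htz : ‖t • z‖ ≤ ‖t‖ * R := by
    rw [norm_smul]; gcongr; simpa using hKR hz
  have hrem := hsmall (y := t • z) (by
    rw [dist_zero_right]; rw [lt_div_iff₀ hR] at htr; linarith)
  have hdiff : f' z - t⁻¹ • (f (x + t • z) - f x) =
      -(t⁻¹ • (f (x + t • z) - f x - f' (t • z))) := by
    rw [map_smul, smul_sub, smul_sub, smul_sub, inv_smul_smul₀ ht0]; abel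
  rw [dist_eq_norm, hdiff, norm_neg, norm_smul, norm_inv]
  have ht' : 0 < ‖t‖ := norm_pos_iff.2 ht0
  calc ‖t‖⁻¹ * ‖f (x + t • z) - f x - f' (t • z)‖ ≤ ‖t‖⁻¹ * (η / (2 * R) * (‖t‖ * R)) := by
        gcongr; exact hrem.trans (by gcongr)
    _ = η / 2 := by field_simp
    _ < η := half_lt_self hη

theorem exists_clm_apply_fderiv_eq_self_conj {ρ : ℂ → ℂ} {z₀ : ℂ} (h1 : wirt ρ z₀ ≠ 0)
    (h2 : awirt ρ z₀ ≠ 0) :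
    ∃ B : ℂ × ℂ →L[ℂ] ℂ × ℂ, ∀ w, B (fderiv ℝ ρ z₀ w, fderiv ℝ ρ z₀ (I * w)) = (w, conj w) := by
  open ContinuousLinearMap in
  refine ⟨((2 * wirt ρ z₀)⁻¹ • (fst ℂ ℂ ℂ - I • snd ℂ ℂ ℂ)).prod
    ((2 * awirt ρ z₀)⁻¹ • (fst ℂ ℂ ℂ + I • snd ℂ ℂ ℂ)), fun w => ?_⟩
  simp only [fderiv_apply_eq_wirt_mul_add_awirt_mul_conj ρ z₀, prod_apply, smul_apply, sub_apply,
    add_apply, coe_fst', coe_snd', smul_eq_mul, map_mul, conj_I]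
  ext
  · field_simp
    linear_combination (awirt ρ z₀ * conj w - wirt ρ z₀ * w) * I_sq
  · field_simp
    linear_combination (wirt ρ z₀ * w - awirt ρ z₀ * conj w) * I_sq

theorem HasFDerivAt.prodMk_comp_add_comp_add_I_mul {ρ : ℂ → ℂ} {L : ℂ →L[ℝ] ℂ} {z₀ : ℂ}
    (h : HasFDerivAt ρ L z₀) :
    HasFDerivAt (fun w => (ρ (z₀ + w), ρ (z₀ + I * w)))
      (L.prod (L.comp (I • ContinuousLinearMap.id ℝ ℂ))) 0 := by
  have hρ : HasFDerivAt ρ L (z₀ + 0) := by rwa [add_zero]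
  have hρI : HasFDerivAt ρ L (z₀ + I * 0) := by rwa [mul_zero, add_zero]
  exact (hρ.comp 0 ((hasFDerivAt_id 0).const_add z₀)).prodMk
    (hρI.comp 0 (((hasFDerivAt_id 0).const_smul I).const_add z₀))

theorem sqrt_norm_fst_sq_add_norm_snd_sq_le {E F : Type*} [SeminormedAddCommGroup E]
    [SeminormedAddCommGroup F] (v : E × F) : √(‖v.1‖ ^ 2 + ‖v.2‖ ^ 2) ≤ 2 * ‖v‖ := by
  rw [show 2 * ‖v‖ = √((2 * ‖v‖) ^ 2) from (Real.sqrt_sq (by positivity)).symm]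
  gcongr
  nlinarith [norm_fst_le v, norm_snd_le v, norm_nonneg v.1, norm_nonneg v.2]

theorem approx_id_and_conj_of_both_wirt_ne_zero_general
    (ρ : ℂ → ℂ) (z₀ : ℂ) (hρd : DifferentiableAt ℝ ρ z₀)
    (h1 : wirt ρ z₀ ≠ 0) (h2 : awirt ρ z₀ ≠ 0)
    (K : Set ℂ) (hK : IsCompact K) (ε : ℝ) (hε : 0 < ε) :
    ∃ (A : ℂ →ₗ[ℂ] ℂ × ℂ) (b : ℂ × ℂ) (B : ℂ × ℂ →ₗ[ℂ] ℂ × ℂ) (c : ℂ × ℂ),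
      ∀ z ∈ K,
        Real.sqrt
          ((‖(B (ρ (A z + b).1, ρ (A z + b).2) + c).1 - z‖)^2 +
           (‖(B (ρ (A z + b).1, ρ (A z + b).2) + c).2
              - starRingEnd ℂ z‖)^2) < ε := by
  obtain ⟨B₀, hB₀⟩ := exists_clm_apply_fderiv_eq_self_conj h1 h2
  set f := fderiv ℝ ρ z₀
  set G : ℂ → ℂ × ℂ := fun w => B₀ (ρ (z₀ + w), ρ (z₀ + I * w))
  set G' := (B₀.restrictScalars ℝ).comp (f.prod (f.comp (I • ContinuousLinearMap.id ℝ ℂ)))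
  have hG : HasFDerivAt G G' 0 :=
    (B₀.restrictScalars ℝ).hasFDerivAt.comp 0 hρd.hasFDerivAt.prodMk_comp_add_comp_add_I_mul
  have hG' : ∀ w, G' w = (w, conj w) := hB₀
  obtain ⟨t, ht⟩ := (Metric.tendstoUniformlyOn_iff.1
    (hG.tendstoUniformlyOn_diffQuot hK.isBounded) (ε / 2) (half_pos hε)).exists
  set A : ℂ →ₗ[ℂ] ℂ × ℂ := t • LinearMap.id.prod (I • LinearMap.id)
  set B : ℂ × ℂ →ₗ[ℂ] ℂ × ℂ := t⁻¹ • B₀.toLinearMap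
  refine ⟨A, (z₀, z₀), B, -(t⁻¹ • G 0), fun z hz => ?_⟩
  set X := B (ρ (A z + (z₀, z₀)).1, ρ (A z + (z₀, z₀)).2) + -(t⁻¹ • G 0)
  have hX : X = t⁻¹ • (G (0 + t • z) - G 0) := by
    simp [X, G, A, B, sub_eq_add_neg, add_comm, mul_left_comm]
  calc √(‖X.1 - z‖ ^ 2 + ‖X.2 - conj z‖ ^ 2) ≤ 2 * ‖X - (z, conj z)‖ :=
        sqrt_norm_fst_sq_add_norm_snd_sq_le (X - (z, conj z))
    _ = 2 * dist (G' z) (t⁻¹ • (G (0 + t • z) - G 0)) := by rw [hX, hG', dist_comm, dist_eq_norm]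
    _ < ε := by linarith [ht z hz]

/-- if both Wirtinger derivatives of ρ are nonzero at z₀, then
z ↦ (z, conj z) can be uniformly approximated on compact sets (in the Euclidean norm
on ℂ²) by ψ ∘ ρ^{×2} ∘ φ with ℂ-affine φ : ℂ → ℂ² and ψ : ℂ² → ℂ². -/
theorem approx_id_and_conj_of_both_wirt_ne_zero
    (ρ : ℂ → ℂ) (hρc : Continuous ρ) (z₀ : ℂ) (hρd : DifferentiableAt ℝ ρ z₀)
    (h1 : wirt ρ z₀ ≠ 0) (h2 : awirt ρ z₀ ≠ 0)
    (K : Set ℂ) (hK : IsCompact K) (ε : ℝ) (hε : 0 < ε) :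
    ∃ (A : ℂ →ₗ[ℂ] ℂ × ℂ) (b : ℂ × ℂ) (B : ℂ × ℂ →ₗ[ℂ] ℂ × ℂ) (c : ℂ × ℂ),
      ∀ z ∈ K,
        Real.sqrt
          ((‖(B (ρ (A z + b).1, ρ (A z + b).2) + c).1 - z‖)^2 +
           (‖(B (ρ (A z + b).1, ρ (A z + b).2) + c).2
              - starRingEnd ℂ z‖)^2) < ε :=
  approx_id_and_conj_of_both_wirt_ne_zero_general ρ z₀ hρd h1 h2 K hK ε hε
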